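/- Let (X,d) be a quasi cone metric space in which every backward convergent sequence is also forward convergent (to the same limit). Then the backward topology T_b on X is Hausdorff. -/

import Mathlib

open TopologicalSpace

/-- A quasi cone metric space on `X` with values in a real Banach space `E`,
ordered by a cone `P` with nonempty interior. -/
structure QCMS (X : Type*) (E : Type*) [NormedAddCommGroup E] [NormedSpace ℝ E] : Type _ where
  P : Set E
  P_closed : IsClosed P
  P_ne : P ≠ {0}
  P_nonempty : P.Nonempty
  P_smul_add : ∀ ⦃x⦄, x ∈ P → ∀ ⦃y⦄, y ∈ P → ∀ s t : ℝ, 0 ≤ s → 0 ≤ t → s • x + t • y ∈ P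
  P_eq_zero : ∀ x, x ∈ P → -x ∈ P → x = 0
  P_int : (interior P).Nonempty
  d : X → X → E
  d_mem : ∀ x y, d x y ∈ P
  d_eq_zero_iff : ∀ x y, d x y = 0 ↔ x = y
  triangle : ∀ x y z, d x z + d z y - d x y ∈ P

namespace QCMS

variable {X E : Type*} [NormedAddCommGroup E] [NormedSpace ℝ E]

/-- `a ≪ b` : `b - a` lies in the interior of the cone. -/
def lt' (Q : QCMS X E) (a b : E) : Prop := b - a ∈ interior Q.P

/-- Forward open ball. -/
def ballF (Q : QCMS X E) (x : X) (u : E) : Set X := {y | Q.lt' (Q.d x y) u}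

/-- Backward open ball. -/
def ballB (Q : QCMS X E) (x : X) (u : E) : Set X := {y | Q.lt' (Q.d y x) u}

/-- The forward topology, generated by forward open balls. -/
def Tf (Q : QCMS X E) : TopologicalSpace X :=
  generateFrom {s | ∃ x u, u ∈ interior Q.P ∧ s = Q.ballF x u}

/-- The backward topology, generated by backward open balls. -/
def Tb (Q : QCMS X E) : TopologicalSpace X :=
  generateFrom {s | ∃ x u, u ∈ interior Q.P ∧ s = Q.ballB x u}

/-- Forward convergence of a sequence. -/
def FConv (Q : QCMS X E) (x : ℕ → X) (a : X) : Prop :=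
  ∀ u ∈ interior Q.P, ∃ N, ∀ n ≥ N, Q.lt' (Q.d a (x n)) u

/-- Backward convergence of a sequence. -/
def BConv (Q : QCMS X E) (x : ℕ → X) (a : X) : Prop :=
  ∀ u ∈ interior Q.P, ∃ N, ∀ n ≥ N, Q.lt' (Q.d (x n) a) u

/-- Forward Cauchy sequence. -/
def FCauchy (Q : QCMS X E) (x : ℕ → X) : Prop :=
  ∀ u ∈ interior Q.P, ∃ N, ∀ m n, N ≤ m → m ≤ n → Q.lt' (Q.d (x m) (x n)) u

/-- Forward sequential compactness of the whole space. -/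
def FSeqCompact (Q : QCMS X E) : Prop :=
  ∀ x : ℕ → X, ∃ (a : X) (φ : ℕ → ℕ), StrictMono φ ∧ Q.FConv (x ∘ φ) a

/-- Forward total boundedness of the whole space. -/
def FTotallyBounded (Q : QCMS X E) : Prop :=
  ∀ u ∈ interior Q.P, ∃ t : Finset X, ∀ y : X, ∃ c ∈ t, y ∈ Q.ballF c u

/-- Forward completeness. -/
def FComplete (Q : QCMS X E) : Prop :=
  ∀ x : ℕ → X, Q.FCauchy x → ∃ a, Q.FConv x a

end QCMS

/-!
If `x` and `y` cannot be separated by backward balls, pick `z n` in the backward balls of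
radius `ε n → 0` around both points. Then `z n → x` and `z n → y` backward, hence `z n → x`
forward by hypothesis, and the triangle inequality `d x y ≤ d x (z n) + d (z n) y` gives
`d x y ≪ w` for every interior `w`. Since the cone is closed, `-d x y ∈ P`, so `d x y = 0`.
-/

open Filter Topology

namespace QCMS

variable {X E : Type*} [NormedAddCommGroup E] [NormedSpace ℝ E] (Q : QCMS X E)

lemma P_add_mem {a b : E} (ha : a ∈ Q.P) (hb : b ∈ Q.P) : a + b ∈ Q.P := by
  simpa using Q.P_smul_add ha hb 1 1 zero_le_one zero_le_one

lemma add_mem_interior {a b : E} (ha : a ∈ interior Q.P) (hb : b ∈ Q.P) :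
    a + b ∈ interior Q.P := by
  have hsub : (· + b) '' interior Q.P ⊆ Q.P := by
    rintro _ ⟨c, hc, rfl⟩
    exact Q.P_add_mem (interior_subset hc) hb
  exact interior_maximal hsub ((Homeomorph.addRight b).isOpenMap _ isOpen_interior)
    ⟨a, ha, rfl⟩

lemma smul_mem_interior {a : E} {t : ℝ} (ht : 0 < t) (ha : a ∈ interior Q.P) :
    t • a ∈ interior Q.P := by
  have hsub : (t • ·) '' interior Q.P ⊆ Q.P := by
    rintro _ ⟨c, hc, rfl⟩
    simpa using Q.P_smul_add (interior_subset hc) (interior_subset hc) t 0 ht.le le_rfl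
  exact interior_maximal hsub
    ((Homeomorph.smulOfNeZero t ht.ne').isOpenMap _ isOpen_interior) ⟨a, ha, rfl⟩

lemma lt'_trans {a b c : E} (hab : Q.lt' a b) (hbc : Q.lt' b c) : Q.lt' a c := by
  have := Q.add_mem_interior hbc (interior_subset hab)
  rwa [sub_add_sub_cancel] at this

lemma d_lt'_add {x y z : X} {u v : E} (hxz : Q.lt' (Q.d x z) u) (hzy : Q.lt' (Q.d z y) v) :
    Q.lt' (Q.d x y) (u + v) := by
  have := Q.add_mem_interior (Q.add_mem_interior hxz (interior_subset hzy)) (Q.triangle x y z)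
  unfold lt'
  convert this using 1
  abel

lemma exists_seq_mem_interior_tendsto_zero :
    ∃ ε : ℕ → E, (∀ n, ε n ∈ interior Q.P) ∧ Tendsto ε atTop (𝓝 0) := by
  obtain ⟨e, he⟩ := Q.P_int
  refine ⟨fun n => (1 / (n + 1 : ℝ)) • e, fun n => Q.smul_mem_interior (by positivity) he, ?_⟩
  simpa using (tendsto_one_div_add_atTop_nhds_zero_nat (𝕜 := ℝ)).smul_const e

lemma eventually_lt'_of_tendsto_zero {ι : Type*} {l : Filter ι} {ε : ι → E}
    (hε : Tendsto ε l (𝓝 0)) {v : E} (hv : v ∈ interior Q.P) : ∀ᶠ i in l, Q.lt' (ε i) v := by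
  have : Tendsto (fun i => v - ε i) l (𝓝 v) := by
    simpa using tendsto_const_nhds.sub hε
  exact this.eventually (isOpen_interior.mem_nhds hv)

lemma eq_of_forall_d_lt' {x y : X} (hxy : ∀ w ∈ interior Q.P, Q.lt' (Q.d x y) w) : x = y := by
  obtain ⟨ε, hε_mem, hε⟩ := Q.exists_seq_mem_interior_tendsto_zero
  have hlim : Tendsto (fun n => ε n - Q.d x y) atTop (𝓝 (-Q.d x y)) := by
    simpa using hε.sub_const (Q.d x y)
  have hneg : -Q.d x y ∈ Q.P := Q.P_closed.mem_of_tendsto hlim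
    (Eventually.of_forall fun n => interior_subset (hxy (ε n) (hε_mem n)))
  exact (Q.d_eq_zero_iff x y).mp (Q.P_eq_zero _ (Q.d_mem x y) hneg)

lemma bConv_of_mem_ballB {ε : ℕ → E} (hε : Tendsto ε atTop (𝓝 0)) {z : ℕ → X} {x : X}
    (hz : ∀ n, z n ∈ Q.ballB x (ε n)) : Q.BConv z x := fun _ hv =>
  eventually_atTop.mp <| (Q.eventually_lt'_of_tendsto_zero hε hv).mono fun n hn =>
    Q.lt'_trans (hz n) hn

lemma eq_of_ballB_inter_nonempty (h : ∀ (x : ℕ → X) (a : X), Q.BConv x a → Q.FConv x a)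
    {x y : X} (hxy : ∀ u ∈ interior Q.P, (Q.ballB x u ∩ Q.ballB y u).Nonempty) : x = y := by
  obtain ⟨ε, hε_mem, hε⟩ := Q.exists_seq_mem_interior_tendsto_zero
  choose z hzx hzy using fun n => hxy (ε n) (hε_mem n)
  have hfx : Q.FConv z x := h z x (Q.bConv_of_mem_ballB hε hzx)
  have hby : Q.BConv z y := Q.bConv_of_mem_ballB hε hzy
  refine Q.eq_of_forall_d_lt' fun w hw => ?_
  have hw2 : (1 / 2 : ℝ) • w ∈ interior Q.P := Q.smul_mem_interior one_half_pos hw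
  obtain ⟨N₁, hN₁⟩ := hfx _ hw2
  obtain ⟨N₂, hN₂⟩ := hby _ hw2
  have := Q.d_lt'_add (hN₁ (max N₁ N₂) (le_max_left _ _)) (hN₂ (max N₁ N₂) (le_max_right _ _))
  rwa [← add_smul, add_halves, one_smul] at this

lemma isOpen_ballB (x : X) {u : E} (hu : u ∈ interior Q.P) : IsOpen[Q.Tb] (Q.ballB x u) :=
  isOpen_generateFrom_of_mem ⟨x, u, hu, rfl⟩

lemma mem_ballB_self (x : X) {u : E} (hu : u ∈ interior Q.P) : x ∈ Q.ballB x u := by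
  simpa [ballB, lt', (Q.d_eq_zero_iff x x).mpr rfl] using hu

end QCMS

/-- if backward convergence implies forward convergence,
the backward topology is Hausdorff. -/
theorem backward_topology_t2 {X E : Type*} [NormedAddCommGroup E] [NormedSpace ℝ E]
    (Q : QCMS X E) (h : ∀ (x : ℕ → X) (a : X), Q.BConv x a → Q.FConv x a) :
    @T2Space X Q.Tb := by
  refine @T2Space.mk X Q.Tb fun x y hne => ?_
  by_contra hsep
  refine hne (Q.eq_of_ballB_inter_nonempty h fun u hu => ?_)
  exact Set.not_disjoint_iff_nonempty_inter.mp fun hdisj => hsep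
    ⟨_, _, Q.isOpen_ballB x hu, Q.isOpen_ballB y hu, Q.mem_ballB_self x hu,
      Q.mem_ballB_self y hu, hdisj⟩
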